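/- arXiv:1612.08036 — 4 statements merged into one kernel-verified Lean document; each statement's English description precedes it below -/
import Mathlib

section
/- The decision version of MinTree is NP-hard: given a finite graph G = (V,E) with integer edge weights w : E → ℤ (possibly negative), a root r ∈ V, and a bound k, deciding whether there exists a subtree of G containing r with total edge weight at most k is NP-hard, via reduction from the Steiner tree problem. -/
/-!
Attaching a pendant edge of weight `-M` to every terminal turns Steiner trees into rooted
subtrees: a Steiner tree `R` for `T` gives the tree `R ∪ {pendant edges}` rooted at the pendant
vertex of `t₀`, of weight `w(R) - M·|T|`. Conversely, since all other weights are nonnegative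
and `k < M`, a rooted subtree of weight `≤ k - M·|T|` must contain every pendant edge. Deleting
them leaves a tree of weight `≤ k` in `G`, and it reaches every terminal because the pendant
vertices were reachable from the root only through their terminals.
-/

variable {V : Type} [Fintype V] [DecidableEq V]

def incVerts (R : Finset (Sym2 V)) : Finset V :=
  Finset.univ.filter (fun v => ∃ e ∈ R, v ∈ e)

def ReachE (R : Finset (Sym2 V)) (u v : V) : Prop :=
  Relation.ReflTransGen (fun a b => s(a, b) ∈ R) u v

/-- `R` is (the edge set of) a tree containing the vertex `r`: every vertex touched by
`R` is connected to `r`, and the number of edges is one less than the number of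
vertices (the touched ones together with `r`). -/
def IsRTree (R : Finset (Sym2 V)) (r : V) : Prop :=
  (∀ v ∈ incVerts R, ReachE R r v) ∧ R.card + 1 = (insert r (incVerts R)).card

namespace SteinerToMinTree

open Finset

variable {α : Type}

abbrev pendantEdge (t : α) : Sym2 (α ⊕ α) := s(Sum.inl t, Sum.inr t)

lemma pendantEdge_injective : Function.Injective (pendantEdge (α := α)) := by
  intro a b h
  simpa [Sym2.eq_iff] using h

lemma map_inl_ne_pendantEdge (e : Sym2 α) (t : α) : e.map Sum.inl ≠ pendantEdge t := by
  induction e using Sym2.ind with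
  | _ a b => simp

lemma reachE_mono {R S : Finset (Sym2 α)} (h : R ⊆ S) {u v : α} (huv : ReachE R u v) :
    ReachE S u v :=
  Relation.ReflTransGen.mono (fun _ _ hab => h hab) u v huv

lemma reachE_image_map {β : Type} [DecidableEq β] (f : α → β) {R : Finset (Sym2 α)} {u v : α}
    (h : ReachE R u v) : ReachE (R.image (Sym2.map f)) (f u) (f v) :=
  Relation.ReflTransGen.lift f (fun _ _ hab => mem_image_of_mem (Sym2.map f) hab) u v h

variable [DecidableEq α]

def withPendants (T : Finset α) (R : Finset (Sym2 α)) : Finset (Sym2 (α ⊕ α)) :=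
  R.image (Sym2.map Sum.inl) ∪ T.image pendantEdge

lemma disjoint_image_map_inl_image_pendantEdge (R : Finset (Sym2 α)) (T : Finset α) :
    Disjoint (R.image (Sym2.map Sum.inl)) (T.image pendantEdge) := by
  rw [disjoint_left]
  rintro _ he he'
  obtain ⟨e, -, rfl⟩ := mem_image.1 he
  obtain ⟨t, -, heq⟩ := mem_image.1 he'
  exact map_inl_ne_pendantEdge e t heq.symm

lemma withPendants_mono {T : Finset α} {R S : Finset (Sym2 α)} (h : R ⊆ S) :
    withPendants T R ⊆ withPendants T S :=
  union_subset_union (image_subset_image h) subset_rfl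

lemma card_withPendants (T : Finset α) (R : Finset (Sym2 α)) :
    (withPendants T R).card = R.card + T.card := by
  rw [withPendants, card_union_of_disjoint (disjoint_image_map_inl_image_pendantEdge R T),
    card_image_of_injective _ (Sym2.map.injective Sum.inl_injective),
    card_image_of_injective _ pendantEdge_injective]

lemma sum_withPendants {β : Type*} [AddCommMonoid β] (T : Finset α) (R : Finset (Sym2 α))
    {w : Sym2 α → β} {w' : Sym2 (α ⊕ α) → β} {c : β}
    (hw : ∀ e, w' (e.map Sum.inl) = w e) (hc : ∀ t ∈ T, w' (pendantEdge t) = c) :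
    ∑ e ∈ withPendants T R, w' e = ∑ e ∈ R, w e + T.card • c := by
  rw [withPendants, sum_union (disjoint_image_map_inl_image_pendantEdge R T),
    sum_image fun _ _ _ _ h => Sym2.map.injective Sum.inl_injective h,
    sum_image fun _ _ _ _ h => pendantEdge_injective h,
    sum_congr rfl fun e _ => hw e, sum_congr rfl hc, sum_const]

lemma eq_withPendants_filter {T : Finset α} {G : Finset (Sym2 α)} {R' : Finset (Sym2 (α ⊕ α))}
    (hR' : R' ⊆ withPendants T G) (hpend : T.image pendantEdge ⊆ R') :
    R' = withPendants T (G.filter fun e => e.map Sum.inl ∈ R') := by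
  refine Subset.antisymm (fun e he => ?_) (union_subset ?_ hpend)
  · rcases mem_union.1 (hR' he) with h | h
    · obtain ⟨e, heG, rfl⟩ := mem_image.1 h
      exact mem_union_left _ (mem_image_of_mem _ (mem_filter.2 ⟨heG, he⟩))
    · exact mem_union_right _ h
  · intro _ he
    obtain ⟨e, heR, rfl⟩ := mem_image.1 he
    exact (mem_filter.1 heR).2

/-- All other edges are nonnegative, so leaving out a pendant edge costs at least `M > k`. -/
lemma image_pendantEdge_subset_of_sum_le {T : Finset α} {G : Finset (Sym2 α)}
    {R' : Finset (Sym2 (α ⊕ α))} {w' : Sym2 (α ⊕ α) → ℤ} {M k : ℤ}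
    (hR' : R' ⊆ withPendants T G) (hw' : ∀ e ∈ G, 0 ≤ w' (e.map Sum.inl))
    (hpend : ∀ t ∈ T, w' (pendantEdge t) = -M) (hM : 0 ≤ M) (hk : k < M)
    (hsum : ∑ e ∈ R', w' e ≤ k - M * T.card) :
    T.image pendantEdge ⊆ R' := by
  set P := R' ∩ T.image pendantEdge
  have hsum_P : ∑ e ∈ P, w' e = -M * P.card := by
    have hP : ∀ e ∈ P, w' e = -M := fun e he => by
      obtain ⟨t, ht, rfl⟩ := mem_image.1 (mem_inter.1 he).2
      exact hpend t ht
    rw [sum_congr rfl hP, sum_const, nsmul_eq_mul]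
    ring
  have hsum_rest : 0 ≤ ∑ e ∈ R' \ P, w' e := by
    refine sum_nonneg fun e he => ?_
    obtain ⟨heR', heP⟩ := mem_sdiff.1 he
    rcases mem_union.1 (hR' heR') with h | h
    · obtain ⟨e, heG, rfl⟩ := mem_image.1 h
      exact hw' e heG
    · exact absurd (mem_inter.2 ⟨heR', h⟩) heP
  have hsplit := sum_sdiff (f := w') (inter_subset_left : P ⊆ R')
  have hcard : T.card ≤ P.card := by
    by_contra! hlt
    have : (P.card : ℤ) + 1 ≤ T.card := by exact_mod_cast hlt
    nlinarith
  have hPT : P = T.image pendantEdge := eq_of_subset_of_card_le inter_subset_right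
    (by rwa [card_image_of_injective _ pendantEdge_injective])
  exact hPT ▸ inter_subset_left

/-- Folding each pendant vertex onto its terminal maps pendant edges to loops. -/
lemma reachE_elim_of_reachE_withPendants {T : Finset α} {R : Finset (Sym2 α)} {u v : α ⊕ α}
    (h : ReachE (withPendants T R) u v) :
    ReachE R (Sum.elim id id u) (Sum.elim id id v) := by
  refine Relation.ReflTransGen.lift' _ (fun a b hab => ?_) u v h
  rcases mem_union.1 hab with hab | hab
  · obtain ⟨e, he, heq⟩ := mem_image.1 hab
    induction e using Sym2.ind with
    | _ p q =>
      rcases Sym2.eq_iff.1 heq with ⟨rfl, rfl⟩ | ⟨rfl, rfl⟩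
      · exact .single he
      · exact .single (Sym2.eq_swap ▸ he)
  · obtain ⟨t, -, heq⟩ := mem_image.1 hab
    rcases Sym2.eq_iff.1 heq with ⟨rfl, rfl⟩ | ⟨rfl, rfl⟩ <;> exact .refl

section incVerts

variable [Fintype α]

lemma mem_incVerts {R : Finset (Sym2 α)} {v : α} : v ∈ incVerts R ↔ ∃ e ∈ R, v ∈ e := by
  simp [incVerts]

lemma incVerts_withPendants (T : Finset α) (R : Finset (Sym2 α)) :
    incVerts (withPendants T R) = (incVerts R ∪ T).image Sum.inl ∪ T.image Sum.inr := by
  ext (x | x) <;>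
  · simp only [mem_incVerts, withPendants, mem_union, mem_image]
    aesop

lemma eq_or_mem_incVerts_of_reachE {R : Finset (Sym2 α)} {u v : α}
    (h : ReachE R u v) : u = v ∨ v ∈ incVerts R := by
  cases h with
  | refl => exact .inl rfl
  | tail _ hlast => exact .inr (mem_incVerts.2 ⟨_, hlast, Sym2.mem_mk_right _ _⟩)

lemma card_insert_inr_incVerts_withPendants {T : Finset α} {t₀ : α} (ht₀ : t₀ ∈ T)
    (R : Finset (Sym2 α)) :
    (insert (Sum.inr t₀) (incVerts (withPendants T R))).card = (incVerts R ∪ T).card + T.card := by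
  rw [incVerts_withPendants, insert_eq_self.2 (mem_union_right _ (mem_image_of_mem _ ht₀)),
    card_union_of_disjoint (disjoint_left.2 (by simp)),
    card_image_of_injective _ Sum.inl_injective, card_image_of_injective _ Sum.inr_injective]

lemma subset_insert_incVerts_of_reachE_withPendants {T : Finset α} {R : Finset (Sym2 α)}
    {t₀ : α} (h : ∀ v ∈ incVerts (withPendants T R), ReachE (withPendants T R) (Sum.inr t₀) v) :
    T ⊆ insert t₀ (incVerts R) := by
  intro t ht
  have ht' : Sum.inl t ∈ incVerts (withPendants T R) := by
    rw [incVerts_withPendants]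
    exact mem_union_left _ (mem_image_of_mem _ (mem_union_right _ ht))
  rcases eq_or_mem_incVerts_of_reachE (reachE_elim_of_reachE_withPendants (h _ ht')) with
    rfl | hR
  · exact mem_insert_self _ _
  · exact mem_insert_of_mem hR

lemma reachE_withPendants_of_reachE {T : Finset α} {R : Finset (Sym2 α)} {t₀ : α}
    (ht₀ : t₀ ∈ T) (hT : T ⊆ insert t₀ (incVerts R)) (h : ∀ v ∈ incVerts R, ReachE R t₀ v) :
    ∀ v ∈ incVerts (withPendants T R), ReachE (withPendants T R) (Sum.inr t₀) v := by
  have hpend : ∀ t ∈ T, pendantEdge t ∈ withPendants T R := fun t ht =>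
    mem_union_right _ (mem_image_of_mem _ ht)
  have hroot : ReachE (withPendants T R) (Sum.inr t₀) (Sum.inl t₀) :=
    .single (Sym2.eq_swap ▸ hpend t₀ ht₀)
  have hinl : ∀ x ∈ insert t₀ (incVerts R),
      ReachE (withPendants T R) (Sum.inr t₀) (Sum.inl x) := by
    intro x hx
    rcases mem_insert.1 hx with rfl | hx
    · exact hroot
    · exact hroot.trans (reachE_mono subset_union_left (reachE_image_map Sum.inl (h x hx)))
  intro v hv
  rw [incVerts_withPendants] at hv
  rcases mem_union.1 hv with hv | hv
  · obtain ⟨x, hx, rfl⟩ := mem_image.1 hv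
    rcases mem_union.1 hx with hx | hx
    · exact hinl x (mem_insert_of_mem hx)
    · exact hinl x (hT hx)
  · obtain ⟨x, hx, rfl⟩ := mem_image.1 hv
    exact (hinl x (hT hx)).tail (hpend x hx)

lemma reachE_of_reachE_withPendants {T : Finset α} {R : Finset (Sym2 α)} {t₀ : α}
    (h : ∀ v ∈ incVerts (withPendants T R), ReachE (withPendants T R) (Sum.inr t₀) v) :
    ∀ v ∈ incVerts R, ReachE R t₀ v := by
  intro v hv
  refine reachE_elim_of_reachE_withPendants (h (Sum.inl v) ?_)
  rw [incVerts_withPendants]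
  exact mem_union_left _ (mem_image_of_mem _ (mem_union_left _ hv))

lemma isRTree_withPendants_iff {T : Finset α} {R : Finset (Sym2 α)} {t₀ : α}
    (ht₀ : t₀ ∈ T) (hT : T ⊆ insert t₀ (incVerts R)) :
    IsRTree (withPendants T R) (Sum.inr t₀) ↔ IsRTree R t₀ := by
  have hins : insert t₀ (incVerts R) = incVerts R ∪ T :=
    Subset.antisymm (insert_subset (mem_union_right _ ht₀) subset_union_left)
      (union_subset (subset_insert _ _) hT)
  rw [IsRTree, IsRTree, card_withPendants, card_insert_inr_incVerts_withPendants ht₀, hins]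
  exact and_congr ⟨reachE_of_reachE_withPendants, reachE_withPendants_of_reachE ht₀ hT⟩
    (by omega)

end incVerts

end SteinerToMinTree

open SteinerToMinTree in
/-- NP-hardness of the decision version of MinTree via reduction from the
Steiner tree problem (the heart of NP-hardness: a correct many-one reduction). Given a
Steiner instance (`G`, integer weights `w ≥ 0`, terminals `T` with `t₀ ∈ T`, bound
`k < M` where `M = 1 + ∑ |w|`), build `G'` by attaching to each terminal `t` a pendant
vertex via an edge of weight `−M`, rooted at the pendant vertex `r = inr t₀`. Then
`G` has a Steiner tree for `T` of weight `≤ k` iff `G'` has a subtree containing `r`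
of weight `≤ k − M·|T|`. -/
theorem stmt7 {V : Type} [Fintype V] [DecidableEq V]
    (G : Finset (Sym2 V)) (w : Sym2 V → ℤ) (hw : ∀ e ∈ G, 0 ≤ w e)
    (T : Finset V) (t₀ : V) (ht₀ : t₀ ∈ T)
    (M : ℤ) (hM : M = 1 + ∑ e ∈ G, |w e|) (k : ℤ) (hk : k < M)
    (G' : Finset (Sym2 (V ⊕ V)))
    (hG' : G' = G.image (Sym2.map Sum.inl) ∪
      T.image (fun t => s(Sum.inl t, Sum.inr t)))
    (w' : Sym2 (V ⊕ V) → ℤ)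
    (hw' : ∀ e, w' e = if ∃ t ∈ T, e = s(Sum.inl t, Sum.inr t) then -M
      else w (Sym2.map (Sum.elim id id) e)) :
    (∃ R ⊆ G, IsRTree R t₀ ∧ T ⊆ insert t₀ (incVerts R) ∧ ∑ e ∈ R, w e ≤ k) ↔
    (∃ R' ⊆ G', IsRTree R' (Sum.inr t₀ : V ⊕ V) ∧
      ∑ e ∈ R', w' e ≤ k - M * T.card) := by
  obtain rfl : G' = withPendants T G := hG'
  have hM0 : 0 ≤ M := by
    rw [hM]
    positivity
  have hw_inl (e : Sym2 V) : w' (e.map Sum.inl) = w e := by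
    rw [hw', if_neg fun ⟨t, _, h⟩ => map_inl_ne_pendantEdge e t h, Sym2.map_map]
    simp
  have hw_pend (t : V) (ht : t ∈ T) : w' (pendantEdge t) = -M := by
    rw [hw', if_pos ⟨t, ht, rfl⟩]
  have hsum (R : Finset (Sym2 V)) :
      ∑ e ∈ withPendants T R, w' e = ∑ e ∈ R, w e - M * T.card := by
    rw [sum_withPendants T R hw_inl hw_pend, nsmul_eq_mul]
    ring
  constructor
  · rintro ⟨R, hRG, hR, hT, hRw⟩
    refine ⟨withPendants T R, withPendants_mono hRG, (isRTree_withPendants_iff ht₀ hT).2 hR, ?_⟩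
    linarith [hsum R]
  · rintro ⟨R', hR'G', hR', hR'w⟩
    have hpend := image_pendantEdge_subset_of_sum_le hR'G'
      (fun e he => (hw_inl e).symm ▸ hw e he) hw_pend hM0 hk hR'w
    rw [eq_withPendants_filter hR'G' hpend] at hR' hR'w
    have hT := subset_insert_incVerts_of_reachE_withPendants hR'.1
    exact ⟨_, Finset.filter_subset _ _, (isRTree_withPendants_iff ht₀ hT).1 hR', hT,
      by linarith [hsum (G.filter fun e => e.map Sum.inl ∈ R')]⟩
end

section
/- Correctness of the Steiner tree reduction: let (G, w, T) be a Steiner tree instance with nonnegative weights, and construct G' by attaching to each terminal t ∈ T a new vertex t' with an edge of weight −M, where M = 1 + Σ_{e∈E} |w(e)|; let r be one of the new vertices. Then every minimum-weight tree in G' containing r contains all |T| new edges, and removing the new edges from such a tree yields a minimum-weight Steiner tree for (G, w, T). Moreover the optimal values satisfy OPT_{MinTree}(G') = OPT_{Steiner}(G) − M·|T|. -/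
set_option linter.unusedSectionVars false

variable {V : Type} [Fintype V] [DecidableEq V]

lemma mem_incVerts {R : Finset (Sym2 V)} {v : V} :
    v ∈ incVerts R ↔ ∃ e ∈ R, v ∈ e := by
  simp [incVerts]

lemma incVerts_union (A B : Finset (Sym2 V)) :
    incVerts (A ∪ B) = incVerts A ∪ incVerts B := by
  ext v
  simp only [mem_incVerts, Finset.mem_union]
  constructor
  · rintro ⟨e, he | he, hv⟩
    exacts [Or.inl ⟨e, he, hv⟩, Or.inr ⟨e, he, hv⟩]
  · rintro (⟨e, he, hv⟩ | ⟨e, he, hv⟩)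
    exacts [⟨e, Or.inl he, hv⟩, ⟨e, Or.inr he, hv⟩]

lemma incVerts_image_inl (X : Finset (Sym2 V)) :
    incVerts (X.image (Sym2.map (Sum.inl : V → V ⊕ V))) = (incVerts X).image Sum.inl := by
  ext v
  simp only [mem_incVerts, Finset.mem_image]
  constructor
  · rintro ⟨e, ⟨f, hf, rfl⟩, hv⟩
    obtain ⟨u, hu, rfl⟩ := Sym2.mem_map.1 hv
    exact ⟨u, ⟨f, hf, hu⟩, rfl⟩
  · rintro ⟨u, ⟨e, he, hue⟩, rfl⟩
    exact ⟨Sym2.map Sum.inl e, ⟨e, he, rfl⟩, Sym2.mem_map.2 ⟨u, hue, rfl⟩⟩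

lemma incVerts_pend (T : Finset V) :
    incVerts (T.image (fun t => s(Sum.inl t, Sum.inr t)))
      = T.image Sum.inl ∪ T.image Sum.inr := by
  ext v
  simp only [mem_incVerts, Finset.mem_image, Finset.mem_union]
  constructor
  · rintro ⟨e, ⟨t, ht, rfl⟩, hv⟩
    rcases Sym2.mem_iff.1 hv with rfl | rfl
    exacts [Or.inl ⟨t, ht, rfl⟩, Or.inr ⟨t, ht, rfl⟩]
  · rintro (⟨t, ht, rfl⟩ | ⟨t, ht, rfl⟩)
    · exact ⟨_, ⟨t, ht, rfl⟩, Sym2.mem_iff.2 (Or.inl rfl)⟩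
    · exact ⟨_, ⟨t, ht, rfl⟩, Sym2.mem_iff.2 (Or.inr rfl)⟩

lemma pend_injective : Function.Injective (fun t : V => s(Sum.inl t, Sum.inr t)) := by
  intro a b h
  simp only [Sym2.eq_iff] at h
  rcases h with ⟨h1, _⟩ | ⟨h1, _⟩
  · exact Sum.inl.inj h1
  · simp at h1

lemma map_inl_ne_pend (f : Sym2 V) (t : V) :
    Sym2.map (Sum.inl : V → V ⊕ V) f ≠ s(Sum.inl t, Sum.inr t) := by
  induction f using Sym2.ind with
  | _ a b =>
    rw [Sym2.map_pair_eq]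
    intro h
    rcases Sym2.eq_iff.1 h with ⟨_, h2⟩ | ⟨h2, _⟩ <;> simp at h2

lemma disj_aug (X : Finset (Sym2 V)) (T : Finset V) :
    Disjoint (X.image (Sym2.map (Sum.inl : V → V ⊕ V)))
      (T.image (fun t => s(Sum.inl t, Sum.inr t))) := by
  rw [Finset.disjoint_left]
  intro e he he'
  obtain ⟨f, _, rfl⟩ := Finset.mem_image.1 he
  obtain ⟨t, _, h⟩ := Finset.mem_image.1 he'
  exact map_inl_ne_pend f t h.symm

lemma disj_inl_inr (A B : Finset V) :
    Disjoint (A.image (Sum.inl : V → V ⊕ V)) (B.image Sum.inr) := by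
  rw [Finset.disjoint_left]
  intro x hx hy
  obtain ⟨a, _, rfl⟩ := Finset.mem_image.1 hx
  obtain ⟨b, _, h⟩ := Finset.mem_image.1 hy
  simp at h

lemma map_inl_eq (f : Sym2 V) (a b : V ⊕ V) (h : Sym2.map Sum.inl f = s(a, b)) :
    f = s(Sum.elim id id a, Sum.elim id id b) := by
  induction f using Sym2.ind with
  | _ c d =>
    rw [Sym2.map_pair_eq] at h
    rcases Sym2.eq_iff.1 h with ⟨rfl, rfl⟩ | ⟨rfl, rfl⟩
    · rfl
    · exact Sym2.eq_swap

lemma reach_lift {Q : Finset (Sym2 V)} {Q' : Finset (Sym2 (V ⊕ V))}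
    (h : Q.image (Sym2.map Sum.inl) ⊆ Q') {a b : V} (hr : ReachE Q a b) :
    ReachE Q' (Sum.inl a) (Sum.inl b) :=
  Relation.ReflTransGen.lift (p := fun a b => s(a, b) ∈ Q') Sum.inl
    (fun x y hxy => by
      show s(Sum.inl x, Sum.inl y) ∈ Q'
      rw [← Sym2.map_pair_eq]
      exact h (Finset.mem_image_of_mem _ hxy)) _ _ hr

lemma reach_proj {B : Finset (Sym2 V)} {T : Finset V} {R' : Finset (Sym2 (V ⊕ V))}
    (hdec : R' ⊆ B.image (Sym2.map Sum.inl) ∪ T.image (fun t => s(Sum.inl t, Sum.inr t)))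
    {x y : V ⊕ V} (h : ReachE R' x y) :
    ReachE B (Sum.elim id id x) (Sum.elim id id y) := by
  have step : ∀ a b : V ⊕ V, s(a, b) ∈ R' →
      ReachE B (Sum.elim id id a) (Sum.elim id id b) := by
    intro a b hab
    rcases Finset.mem_union.1 (hdec hab) with hm | hm
    · obtain ⟨f, hf, hfe⟩ := Finset.mem_image.1 hm
      exact Relation.ReflTransGen.single (map_inl_eq f a b hfe ▸ hf)
    · obtain ⟨t, ht, hte⟩ := Finset.mem_image.1 hm
      have : Sum.elim id id a = Sum.elim id id b := by
        rcases Sym2.eq_iff.1 hte with ⟨rfl, rfl⟩ | ⟨rfl, rfl⟩ <;> rfl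
      rw [this]
      exact Relation.ReflTransGen.refl
  induction h with
  | refl => exact Relation.ReflTransGen.refl
  | tail _ h2 ih => exact ih.trans (step _ _ h2)

lemma card_aug (Q : Finset (Sym2 V)) (T : Finset V) :
    (Q.image (Sym2.map (Sum.inl : V → V ⊕ V)) ∪
      T.image (fun t => s(Sum.inl t, Sum.inr t))).card = Q.card + T.card := by
  rw [Finset.card_union_of_disjoint (disj_aug Q T),
    Finset.card_image_of_injective _ (Sym2.map.injective Sum.inl_injective),
    Finset.card_image_of_injective _ pend_injective]

lemma insert_incVerts_aug {T : Finset V} {t₀ : V} (ht₀ : t₀ ∈ T) (Q : Finset (Sym2 V))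
    (hQT : T ⊆ insert t₀ (incVerts Q)) :
    insert (Sum.inr t₀ : V ⊕ V)
        (incVerts (Q.image (Sym2.map Sum.inl) ∪ T.image (fun t => s(Sum.inl t, Sum.inr t))))
      = (insert t₀ (incVerts Q)).image Sum.inl ∪ T.image Sum.inr := by
  rw [incVerts_union, incVerts_image_inl, incVerts_pend]
  apply Finset.Subset.antisymm
  · rw [Finset.insert_subset_iff]
    refine ⟨Finset.mem_union_right _ (Finset.mem_image_of_mem _ ht₀), ?_⟩
    refine Finset.union_subset ?_ (Finset.union_subset ?_ Finset.subset_union_right)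
    · exact (Finset.image_subset_image (Finset.subset_insert _ _)).trans
        Finset.subset_union_left
    · exact (Finset.image_subset_image hQT).trans Finset.subset_union_left
  · refine Finset.union_subset ?_ ?_
    · rw [Finset.image_insert, Finset.insert_subset_iff]
      constructor
      · exact Finset.mem_insert_of_mem
          (Finset.mem_union_right _ (Finset.mem_union_left _ (Finset.mem_image_of_mem _ ht₀)))
      · exact (Finset.subset_union_left).trans (Finset.subset_insert _ _)
    · exact (Finset.subset_union_right.trans Finset.subset_union_right).trans
        (Finset.subset_insert _ _)

lemma card_insert_aug {T : Finset V} {t₀ : V} (ht₀ : t₀ ∈ T) (Q : Finset (Sym2 V))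
    (hQT : T ⊆ insert t₀ (incVerts Q)) :
    (insert (Sum.inr t₀ : V ⊕ V)
        (incVerts (Q.image (Sym2.map Sum.inl) ∪
          T.image (fun t => s(Sum.inl t, Sum.inr t))))).card
      = (insert t₀ (incVerts Q)).card + T.card := by
  rw [insert_incVerts_aug ht₀ Q hQT,
    Finset.card_union_of_disjoint (disj_inl_inr _ _),
    Finset.card_image_of_injective _ Sum.inl_injective,
    Finset.card_image_of_injective _ Sum.inr_injective]

lemma tree_lift {T : Finset V} {t₀ : V} (ht₀ : t₀ ∈ T)
    {Q : Finset (Sym2 V)} (hQtree : IsRTree Q t₀)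
    (hQT : T ⊆ insert t₀ (incVerts Q)) :
    IsRTree (Q.image (Sym2.map Sum.inl) ∪
      T.image (fun t => s(Sum.inl t, Sum.inr t))) (Sum.inr t₀ : V ⊕ V) := by
  set Q' : Finset (Sym2 (V ⊕ V)) :=
    Q.image (Sym2.map Sum.inl) ∪ T.image (fun t => s(Sum.inl t, Sum.inr t)) with hQ'
  have hpend : ∀ t ∈ T, s(Sum.inl t, Sum.inr t) ∈ Q' := fun t ht =>
    Finset.mem_union_right _ (Finset.mem_image_of_mem _ ht)
  have hreachinl : ∀ u ∈ insert t₀ (incVerts Q), ReachE Q' (Sum.inr t₀) (Sum.inl u) := by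
    intro u hu
    have h0 : ReachE Q' (Sum.inr t₀) (Sum.inl t₀) :=
      Relation.ReflTransGen.single (by rw [Sym2.eq_swap]; exact hpend t₀ ht₀)
    rcases Finset.mem_insert.1 hu with rfl | hu
    · exact h0
    · exact h0.trans (reach_lift Finset.subset_union_left (hQtree.1 u hu))
  constructor
  · intro v hv
    rw [hQ', incVerts_union, incVerts_image_inl, incVerts_pend] at hv
    rcases Finset.mem_union.1 hv with hv | hv
    · obtain ⟨u, hu, rfl⟩ := Finset.mem_image.1 hv
      exact hreachinl u (Finset.mem_insert_of_mem hu)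
    · rcases Finset.mem_union.1 hv with hv | hv
      · obtain ⟨t, ht, rfl⟩ := Finset.mem_image.1 hv
        exact hreachinl t (hQT ht)
      · obtain ⟨t, ht, rfl⟩ := Finset.mem_image.1 hv
        exact (hreachinl t (hQT ht)).tail (hpend t ht)
  · rw [hQ', card_aug, card_insert_aug ht₀ Q hQT, ← hQtree.2]
    omega

lemma w'_map_inl {T : Finset V} {M : ℝ} {w : Sym2 V → ℝ} {w' : Sym2 (V ⊕ V) → ℝ}
    (hw' : ∀ e, w' e = if ∃ t ∈ T, e = s(Sum.inl t, Sum.inr t) then -M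
      else w (Sym2.map (Sum.elim id id) e)) (e : Sym2 V) :
    w' (Sym2.map Sum.inl e) = w e := by
  rw [hw', if_neg, Sym2.map_map]
  · have h : (Sum.elim id id ∘ (Sum.inl : V → V ⊕ V)) = id := by funext x; rfl
    rw [h, Sym2.map_id, id_eq]
  · rintro ⟨t, _, h⟩
    exact map_inl_ne_pend e t h

lemma sum_aug {T : Finset V} {M : ℝ} {w : Sym2 V → ℝ} {w' : Sym2 (V ⊕ V) → ℝ}
    (hw' : ∀ e, w' e = if ∃ t ∈ T, e = s(Sum.inl t, Sum.inr t) then -M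
      else w (Sym2.map (Sum.elim id id) e)) (X : Finset (Sym2 V)) :
    ∑ e ∈ X.image (Sym2.map Sum.inl) ∪ T.image (fun t => s(Sum.inl t, Sum.inr t)), w' e
      = (∑ e ∈ X, w e) - M * T.card := by
  rw [Finset.sum_union (disj_aug X T),
    Finset.sum_image (fun a _ b _ h => Sym2.map.injective Sum.inl_injective h),
    Finset.sum_image (fun a _ b _ h => pend_injective h)]
  have h2 : ∑ t ∈ T, w' s(Sum.inl t, Sum.inr t) = ∑ t ∈ T, -M :=
    Finset.sum_congr rfl (fun t ht => by rw [hw', if_pos ⟨t, ht, rfl⟩])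
  rw [Finset.sum_congr rfl (fun e _ => w'_map_inl hw' e), h2, Finset.sum_const,
    nsmul_eq_mul]
  ring
/-- correctness of the Steiner-tree-to-MinTree reduction. With `G`
connected, nonnegative weights `w`, terminals `T ∋ t₀`, `M = 1 + ∑|w|`, and the
augmented graph `G'` (pendant edges of weight `−M`, root `r = inr t₀`): every
minimum-weight tree `R'` in `G'` containing `r` contains all pendant edges; removing
them (i.e. taking the `G`-edges of `R'`) yields a minimum-weight Steiner tree for
`(G, w, T)`; and `OPT_MinTree(G') = OPT_Steiner(G) − M·|T|`. -/
theorem stmt8 {V : Type} [Fintype V] [DecidableEq V]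
    (G : Finset (Sym2 V)) (w : Sym2 V → ℝ) (hw : ∀ e ∈ G, 0 ≤ w e)
    (hGconn : ∀ u v : V, ReachE G u v)
    (T : Finset V) (t₀ : V) (ht₀ : t₀ ∈ T)
    (M : ℝ) (hM : M = 1 + ∑ e ∈ G, |w e|)
    (G' : Finset (Sym2 (V ⊕ V)))
    (hG' : G' = G.image (Sym2.map Sum.inl) ∪
      T.image (fun t => s(Sum.inl t, Sum.inr t)))
    (w' : Sym2 (V ⊕ V) → ℝ)
    (hw' : ∀ e, w' e = if ∃ t ∈ T, e = s(Sum.inl t, Sum.inr t) then -M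
      else w (Sym2.map (Sum.elim id id) e))
    (R' : Finset (Sym2 (V ⊕ V))) (hR'sub : R' ⊆ G')
    (hR'tree : IsRTree R' (Sum.inr t₀ : V ⊕ V))
    (hR'min : ∀ Q ⊆ G', IsRTree Q (Sum.inr t₀ : V ⊕ V) →
      ∑ e ∈ R', w' e ≤ ∑ e ∈ Q, w' e)
    (S : Finset (Sym2 V)) (hSsub : S ⊆ G) (hStree : IsRTree S t₀)
    (hST : T ⊆ insert t₀ (incVerts S))
    (hSmin : ∀ Q ⊆ G, IsRTree Q t₀ → T ⊆ insert t₀ (incVerts Q) →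
      ∑ e ∈ S, w e ≤ ∑ e ∈ Q, w e) :
    (∀ t ∈ T, s(Sum.inl t, Sum.inr t) ∈ R') ∧
    (IsRTree (G.filter (fun e => Sym2.map Sum.inl e ∈ R')) t₀ ∧
      T ⊆ insert t₀ (incVerts (G.filter (fun e => Sym2.map Sum.inl e ∈ R'))) ∧
      ∀ Q ⊆ G, IsRTree Q t₀ → T ⊆ insert t₀ (incVerts Q) →
        ∑ e ∈ G.filter (fun e => Sym2.map Sum.inl e ∈ R'), w e ≤ ∑ e ∈ Q, w e) ∧
    (∑ e ∈ R', w' e = (∑ e ∈ S, w e) - M * T.card) := by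
  classical
  set B := G.filter (fun e => Sym2.map Sum.inl e ∈ R') with hB
  -- decomposition of R'
  have hdec : R' = B.image (Sym2.map Sum.inl) ∪
      (T.image (fun t => s(Sum.inl t, Sum.inr t)) ∩ R') := by
    apply Finset.Subset.antisymm
    · intro e he
      have hm := hR'sub he
      rw [hG'] at hm
      rcases Finset.mem_union.1 hm with hm | hm
      · obtain ⟨f, hf, rfl⟩ := Finset.mem_image.1 hm
        exact Finset.mem_union_left _
          (Finset.mem_image_of_mem _ (Finset.mem_filter.2 ⟨hf, he⟩))
      · exact Finset.mem_union_right _ (Finset.mem_inter.2 ⟨hm, he⟩)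
    · refine Finset.union_subset ?_ Finset.inter_subset_right
      intro e he
      obtain ⟨f, hf, rfl⟩ := Finset.mem_image.1 he
      exact (Finset.mem_filter.1 hf).2
  have hw'pend : ∀ e ∈ T.image (fun t => s(Sum.inl t, Sum.inr t)), w' e = -M := by
    intro e he
    obtain ⟨t, ht, rfl⟩ := Finset.mem_image.1 he
    rw [hw', if_pos ⟨t, ht, rfl⟩]
  have hsumR : ∑ e ∈ R', w' e = (∑ e ∈ B, w e)
      - M * ((T.image (fun t => s(Sum.inl t, Sum.inr t)) ∩ R').card : ℝ) := by
    conv_lhs => rw [hdec]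
    rw [Finset.sum_union
        (Finset.disjoint_of_subset_right Finset.inter_subset_left (disj_aug B T)),
      Finset.sum_image (fun a _ b _ h => Sym2.map.injective Sum.inl_injective h),
      Finset.sum_congr rfl (fun e _ => w'_map_inl hw' e),
      Finset.sum_congr rfl
        (fun e he => hw'pend e (Finset.mem_inter.1 he).1),
      Finset.sum_const, nsmul_eq_mul]
    ring
  have hM1 : (1:ℝ) ≤ M := by
    have h0 : (0:ℝ) ≤ ∑ e ∈ G, |w e| := Finset.sum_nonneg fun e _ => abs_nonneg _
    rw [hM]; linarith
  have hBnn : 0 ≤ ∑ e ∈ B, w e :=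
    Finset.sum_nonneg fun e he => hw e (Finset.mem_filter.1 he).1
  have hSle : ∑ e ∈ S, w e ≤ M - 1 := by
    calc ∑ e ∈ S, w e ≤ ∑ e ∈ S, |w e| := Finset.sum_le_sum fun e _ => le_abs_self _
    _ ≤ ∑ e ∈ G, |w e| :=
        Finset.sum_le_sum_of_subset_of_nonneg hSsub fun e _ _ => abs_nonneg _
    _ = M - 1 := by rw [hM]; ring
  have hupper : ∑ e ∈ R', w' e ≤ (∑ e ∈ S, w e) - M * T.card := by
    have htree := tree_lift ht₀ hStree hST
    have hsub : S.image (Sym2.map Sum.inl) ∪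
        T.image (fun t => s(Sum.inl t, Sum.inr t)) ⊆ G' := by
      rw [hG']
      exact Finset.union_subset_union_left (Finset.image_subset_image hSsub)
    have hle := hR'min _ hsub htree
    rw [sum_aug hw' S] at hle
    exact hle
  have hPcard : (T.image (fun t => s(Sum.inl t, Sum.inr t))).card = T.card :=
    Finset.card_image_of_injective _ pend_injective
  have hPsub : T.image (fun t => s(Sum.inl t, Sum.inr t)) ⊆ R' := by
    have hTk : T.card ≤ (T.image (fun t => s(Sum.inl t, Sum.inr t)) ∩ R').card := by
      by_contra hnot
      push_neg at hnot
      set k := (T.image (fun t => s(Sum.inl t, Sum.inr t)) ∩ R').card with hk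
      have h2 : (k:ℝ) ≤ (T.card : ℝ) - 1 := by
        have : k + 1 ≤ T.card := hnot
        have := (Nat.cast_le (α := ℝ)).2 this
        push_cast at this
        linarith
      have h1 : (0:ℝ) - M * k ≤ ∑ e ∈ R', w' e := by
        rw [hsumR]; linarith
      have hprod : (0:ℝ) ≤ M * ((T.card : ℝ) - 1 - k) :=
        mul_nonneg (by linarith) (by linarith)
      nlinarith [hupper, hSle, hM1, h1]
    have hle2 : (T.image (fun t => s(Sum.inl t, Sum.inr t))).card ≤
        (T.image (fun t => s(Sum.inl t, Sum.inr t)) ∩ R').card := by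
      rw [hPcard]; exact hTk
    have heq := Finset.eq_of_subset_of_card_le Finset.inter_subset_left hle2
    rw [← heq]
    exact Finset.inter_subset_right
  have first : ∀ t ∈ T, s(Sum.inl t, Sum.inr t) ∈ R' := fun t ht =>
    hPsub (Finset.mem_image_of_mem _ ht)
  have hPR : T.image (fun t => s(Sum.inl t, Sum.inr t)) ∩ R'
      = T.image (fun t => s(Sum.inl t, Sum.inr t)) := Finset.inter_eq_left.2 hPsub
  have hdec2 : R' = B.image (Sym2.map Sum.inl) ∪
      T.image (fun t => s(Sum.inl t, Sum.inr t)) := by rw [hdec, hPR]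
  have hsumR2 : ∑ e ∈ R', w' e = (∑ e ∈ B, w e) - M * T.card := by
    rw [hsumR, hPR, hPcard]
  have hproj : ∀ x y : V ⊕ V, ReachE R' x y →
      ReachE B (Sum.elim id id x) (Sum.elim id id y) :=
    fun x y h => reach_proj hdec2.le h
  have hTB : T ⊆ insert t₀ (incVerts B) := by
    intro t ht
    have hin : Sum.inl t ∈ incVerts R' :=
      mem_incVerts.2 ⟨_, first t ht, Sym2.mem_iff.2 (Or.inl rfl)⟩
    have hr := hproj _ _ (hR'tree.1 _ hin)
    simp only [Sum.elim_inl, Sum.elim_inr, id_eq] at hr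
    rcases hr.cases_tail with h | ⟨c, _, hc⟩
    · rw [h]; exact Finset.mem_insert_self _ _
    · exact Finset.mem_insert_of_mem (mem_incVerts.2 ⟨_, hc, Sym2.mem_iff.2 (Or.inr rfl)⟩)
  have hBtree : IsRTree B t₀ := by
    constructor
    · intro v hv
      obtain ⟨e, heB, hve⟩ := mem_incVerts.1 hv
      have hin : Sum.inl v ∈ incVerts R' :=
        mem_incVerts.2 ⟨_, (Finset.mem_filter.1 heB).2, Sym2.mem_map.2 ⟨v, hve, rfl⟩⟩
      have hr := hproj _ _ (hR'tree.1 _ hin)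
      simpa using hr
    · have h1 := hR'tree.2
      rw [hdec2, card_aug, card_insert_aug ht₀ B hTB] at h1
      omega
  have hBmin : ∀ Q ⊆ G, IsRTree Q t₀ → T ⊆ insert t₀ (incVerts Q) →
      ∑ e ∈ B, w e ≤ ∑ e ∈ Q, w e := by
    intro Q hQsub hQtree hQT
    have htree := tree_lift ht₀ hQtree hQT
    have hsub : Q.image (Sym2.map Sum.inl) ∪
        T.image (fun t => s(Sum.inl t, Sum.inr t)) ⊆ G' := by
      rw [hG']
      exact Finset.union_subset_union_left (Finset.image_subset_image hQsub)
    have hle := hR'min _ hsub htree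
    rw [hsumR2, sum_aug hw' Q] at hle
    linarith
  have hBS : ∑ e ∈ B, w e = ∑ e ∈ S, w e :=
    le_antisymm (hBmin S hSsub hStree hST)
      (hSmin B (Finset.filter_subset _ _) hBtree hTB)
  refine ⟨first, ⟨hBtree, hTB, hBmin⟩, ?_⟩
  rw [hsumR2, hBS]
end

section
/- Let D = (V,E) be a finite directed graph with root r, and let x ∈ {0,1}^E and f ∈ ℝ≥0^E satisfy: (i) x(δ⁻(v)) ≤ 1 for all v ≠ r; (ii) x(δ⁻(r)) = 0; (iii) f(δ⁻(v)) − f(δ⁺(v)) ≥ x(δ⁻(v)) for all v ≠ r; (iv) f(e) ≤ (|V|−1)·x(e) for all e ∈ E. Then the set of edges R = {e : x(e) = 1}, together with r, forms (as an undirected graph on the vertices it touches plus r) a tree containing r. -/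
/-!
Every vertex other than `r` has at most one selected arc entering it and `r` has none, so the
selected arcs form an arborescence rooted at `r` as soon as they contain no cycle. The inflow
`f(δ⁻(v))` is a potential that drops by at least one along every selected arc `(u, v)` with
`u ≠ r`: the demand constraint at `u` gives `f(δ⁻(u)) ≥ f(u, v) + 1`, while the arc `(u, v)`
carries all the flow entering `v` (the other arcs into `v` have `x = 0`, hence `f = 0`). So
following selected arcs backwards from any vertex must end at `r`, and the undirected edges are
in bijection with the non-root vertices they cover.
-/

variable {V : Type} [Fintype V] [DecidableEq V]

open Finset

theorem injOn_sym2Mk {V α : Type*} [Preorder α] {A : Set (V × V)} {r : V} (p : V → α)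
    (hroot : ∀ e ∈ A, e.2 ≠ r)
    (hp : ∀ e ∈ A, e.1 ≠ r → p e.2 < p e.1) :
    Set.InjOn (fun e : V × V => s(e.1, e.2)) A := by
  intro a ha b hb hab
  rcases Sym2.mk_eq_mk_iff.1 hab with h | h
  · exact h
  · subst h
    exact (lt_irrefl _ ((hp _ ha (hroot b hb)).trans (hp b hb (hroot _ ha)))).elim

section Arborescence

variable {α : Type*} [Preorder α] {A : Finset (V × V)} {r : V}

theorem mem_incVerts_image_sym2Mk {v : V} :
    v ∈ incVerts (A.image (fun e => s(e.1, e.2))) ↔ ∃ e ∈ A, v = e.1 ∨ v = e.2 := by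
  simp [incVerts]

variable (p : V → α)

theorem reachE_of_mem_image_snd (htail : ∀ e ∈ A, e.1 ≠ r → e.1 ∈ A.image Prod.snd)
    (hp : ∀ e ∈ A, e.1 ≠ r → p e.2 < p e.1) {v : V} (hv : v ∈ A.image Prod.snd) :
    ReachE (A.image (fun e => s(e.1, e.2))) r v := by
  have : IsTrans V (fun a b => p b < p a) := ⟨fun _ _ _ hab hbc => hbc.trans hab⟩
  have : Std.Irrefl (fun a b : V => p b < p a) := ⟨fun _ => lt_irrefl _⟩
  induction v using (Finite.wellFounded_of_trans_of_irrefl (fun a b : V => p b < p a)).induction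
    with
  | _ v ih =>
    obtain ⟨e, he, rfl⟩ := mem_image.1 hv
    have hedge : s(e.1, e.2) ∈ A.image (fun e => s(e.1, e.2)) := mem_image_of_mem _ he
    by_cases hroot : e.1 = r
    · exact .single (hroot ▸ hedge)
    · exact (ih e.1 (hp e he hroot) (htail e he hroot)).tail hedge

theorem reachE_of_mem_incVerts (htail : ∀ e ∈ A, e.1 ≠ r → e.1 ∈ A.image Prod.snd)
    (hp : ∀ e ∈ A, e.1 ≠ r → p e.2 < p e.1) {v : V}
    (hv : v ∈ incVerts (A.image (fun e => s(e.1, e.2)))) :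
    ReachE (A.image (fun e => s(e.1, e.2))) r v := by
  obtain ⟨e, he, rfl | rfl⟩ := mem_incVerts_image_sym2Mk.1 hv
  · by_cases hroot : e.1 = r
    · exact hroot ▸ .refl
    · exact reachE_of_mem_image_snd p htail hp (htail e he hroot)
  · exact reachE_of_mem_image_snd p htail hp (mem_image_of_mem _ he)

theorem insert_incVerts_image_sym2Mk (htail : ∀ e ∈ A, e.1 ≠ r → e.1 ∈ A.image Prod.snd) :
    insert r (incVerts (A.image (fun e => s(e.1, e.2)))) = insert r (A.image Prod.snd) := by
  ext v
  simp only [mem_insert, mem_incVerts_image_sym2Mk]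
  constructor
  · rintro (rfl | ⟨e, he, rfl | rfl⟩)
    · exact .inl rfl
    · by_cases hroot : e.1 = r
      · exact .inl hroot
      · exact .inr (htail e he hroot)
    · exact .inr (mem_image_of_mem _ he)
  · rintro (rfl | hv)
    · exact .inl rfl
    · obtain ⟨e, he, rfl⟩ := mem_image.1 hv
      exact .inr ⟨e, he, .inr rfl⟩

theorem isRTree_image_sym2Mk (hroot : ∀ e ∈ A, e.2 ≠ r)
    (hinj : Set.InjOn Prod.snd (A : Set (V × V)))
    (htail : ∀ e ∈ A, e.1 ≠ r → e.1 ∈ A.image Prod.snd)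
    (hp : ∀ e ∈ A, e.1 ≠ r → p e.2 < p e.1) :
    IsRTree (A.image (fun e => s(e.1, e.2))) r := by
  refine ⟨fun v => reachE_of_mem_incVerts p htail hp, ?_⟩
  have hr : r ∉ A.image Prod.snd := fun hr => by
    obtain ⟨e, he, hre⟩ := mem_image.1 hr
    exact hroot e he hre
  rw [insert_incVerts_image_sym2Mk htail, card_insert_of_notMem hr, card_image_of_injOn hinj,
    card_image_of_injOn (injOn_sym2Mk p hroot hp)]

end Arborescence

section Arcs

variable {V : Type*} [DecidableEq V]

def inArcs (E : Finset (V × V)) (v : V) : Finset (V × V) := E.filter (·.2 = v)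

def outArcs (E : Finset (V × V)) (v : V) : Finset (V × V) := E.filter (·.1 = v)

end Arcs

/-- The constraints of the flow-based MIP formulation of MinTree, for binary `x` and
nonnegative `f`. -/
structure IsFeasibleFlow (E : Finset (V × V)) (r : V) (x f : V × V → ℝ) : Prop where
  x_mem : ∀ e ∈ E, x e = 0 ∨ x e = 1
  f_nonneg : ∀ e ∈ E, 0 ≤ f e
  sum_inArcs_le_one : ∀ v, v ≠ r → ∑ e ∈ inArcs E v, x e ≤ 1
  sum_inArcs_root : ∑ e ∈ inArcs E r, x e = 0
  demand : ∀ v, v ≠ r →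
    ∑ e ∈ inArcs E v, x e ≤ ∑ e ∈ inArcs E v, f e - ∑ e ∈ outArcs E v, f e
  capacity : ∀ e ∈ E, f e ≤ ((Fintype.card V : ℝ) - 1) * x e

namespace IsFeasibleFlow

variable {E : Finset (V × V)} {r : V} {x f : V × V → ℝ}

theorem x_nonneg (h : IsFeasibleFlow E r x f) {e : V × V} (he : e ∈ E) : 0 ≤ x e := by
  rcases h.x_mem e he with hx | hx <;> simp [hx]

theorem f_eq_zero (h : IsFeasibleFlow E r x f) {e : V × V} (he : e ∈ E) (hx : x e = 0) :
    f e = 0 :=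
  le_antisymm (by simpa [hx] using h.capacity e he) (h.f_nonneg e he)

theorem le_sum_inArcs (h : IsFeasibleFlow E r x f) {e : V × V} (he : e ∈ E) :
    x e ≤ ∑ a ∈ inArcs E e.2, x a :=
  single_le_sum (fun _ ha => h.x_nonneg (mem_filter.1 ha).1) (mem_filter.2 ⟨he, rfl⟩)

theorem snd_ne_root (h : IsFeasibleFlow E r x f) {e : V × V} (he : e ∈ E.filter (x · = 1)) :
    e.2 ≠ r := by
  rintro hroot
  have := h.le_sum_inArcs (mem_filter.1 he).1
  rw [hroot, h.sum_inArcs_root, (mem_filter.1 he).2] at this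
  norm_num at this

theorem injOn_snd (h : IsFeasibleFlow E r x f) :
    Set.InjOn Prod.snd (E.filter (x · = 1) : Set (V × V)) := by
  intro a ha b hb hab
  rw [coe_filter] at ha hb
  by_contra hne
  have hpair : {a, b} ⊆ inArcs E a.2 := by
    simp [insert_subset_iff, inArcs, ha.1, hb.1, hab]
  have hle := sum_le_sum_of_subset_of_nonneg hpair
    fun c hc _ => h.x_nonneg (mem_filter.1 hc).1
  rw [sum_pair hne, ha.2, hb.2] at hle
  have := h.sum_inArcs_le_one a.2 (h.snd_ne_root (mem_filter.2 ha))
  linarith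

theorem sum_inArcs_snd (h : IsFeasibleFlow E r x f) {e : V × V}
    (he : e ∈ E.filter (x · = 1)) : ∑ a ∈ inArcs E e.2, f a = f e := by
  refine sum_eq_single_of_mem e (mem_filter.2 ⟨(mem_filter.1 he).1, rfl⟩) fun a ha hne => ?_
  obtain ⟨haE, hsnd⟩ := mem_filter.1 ha
  refine h.f_eq_zero haE ((h.x_mem a haE).resolve_right fun hxa => hne ?_)
  exact h.injOn_snd (mem_filter.2 ⟨haE, hxa⟩) he hsnd

theorem add_sum_inArcs_le (h : IsFeasibleFlow E r x f) {v : V} (hv : v ≠ r) {e : V × V}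
    (he : e ∈ outArcs E v) : f e + ∑ a ∈ inArcs E v, x a ≤ ∑ a ∈ inArcs E v, f a := by
  have hout : f e ≤ ∑ a ∈ outArcs E v, f a :=
    single_le_sum (fun a ha => h.f_nonneg a (mem_filter.1 ha).1) he
  linarith [h.demand v hv]

theorem one_le_f (h : IsFeasibleFlow E r x f) {e : V × V} (he : e ∈ E.filter (x · = 1)) :
    1 ≤ f e := by
  obtain ⟨heE, hxe⟩ := mem_filter.1 he
  have hout : 0 ≤ ∑ a ∈ outArcs E e.2, f a :=
    sum_nonneg fun a ha => h.f_nonneg a (mem_filter.1 ha).1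
  have := h.demand e.2 (h.snd_ne_root he)
  rw [h.sum_inArcs_snd he] at this
  linarith [h.le_sum_inArcs heE]

theorem fst_mem_image_snd (h : IsFeasibleFlow E r x f) {e : V × V}
    (he : e ∈ E.filter (x · = 1)) (hroot : e.1 ≠ r) :
    e.1 ∈ (E.filter (x · = 1)).image Prod.snd := by
  have hxin : 0 ≤ ∑ a ∈ inArcs E e.1, x a :=
    sum_nonneg fun a ha => h.x_nonneg (mem_filter.1 ha).1
  have hin := h.add_sum_inArcs_le hroot (mem_filter.2 ⟨(mem_filter.1 he).1, rfl⟩)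
  have hpos : 0 < ∑ a ∈ inArcs E e.1, f a := by linarith [h.one_le_f he]
  obtain ⟨a, ha, hfa⟩ := exists_ne_zero_of_sum_ne_zero hpos.ne'
  obtain ⟨haE, hsnd⟩ := mem_filter.1 ha
  have hxa : x a = 1 := (h.x_mem a haE).resolve_left fun hx0 => hfa (h.f_eq_zero haE hx0)
  exact mem_image.2 ⟨a, mem_filter.2 ⟨haE, hxa⟩, hsnd⟩

theorem sum_inArcs_lt (h : IsFeasibleFlow E r x f) {e : V × V}
    (he : e ∈ E.filter (x · = 1)) (hroot : e.1 ≠ r) :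
    ∑ a ∈ inArcs E e.2, f a < ∑ a ∈ inArcs E e.1, f a := by
  obtain ⟨a, ha, hsnd⟩ := mem_image.1 (h.fst_mem_image_snd he hroot)
  have hxin := h.le_sum_inArcs (mem_filter.1 ha).1
  rw [(mem_filter.1 ha).2, hsnd] at hxin
  have hin := h.add_sum_inArcs_le hroot (mem_filter.2 ⟨(mem_filter.1 he).1, rfl⟩)
  rw [h.sum_inArcs_snd he]
  linarith

theorem isRTree (h : IsFeasibleFlow E r x f) :
    IsRTree ((E.filter (x · = 1)).image (fun e => s(e.1, e.2))) r :=
  isRTree_image_sym2Mk (fun v => ∑ a ∈ inArcs E v, f a) (fun _ => h.snd_ne_root) h.injOn_snd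
    (fun _ => h.fst_mem_image_snd) (fun _ => h.sum_inArcs_lt)

end IsFeasibleFlow

/-- forward direction of Proposition 1: if `x ∈ {0,1}^E` and
`f ∈ ℝ≥0^E` satisfy (i) `x(δ⁻(v)) ≤ 1` for `v ≠ r`, (ii) `x(δ⁻(r)) = 0`,
(iii) `f(δ⁻(v)) − f(δ⁺(v)) ≥ x(δ⁻(v))` for `v ≠ r`, and
(iv) `f(e) ≤ (|V|−1)·x(e)`, then the edges with `x(e) = 1`, viewed as an undirected
graph together with `r`, form a tree containing `r`. -/
theorem stmt11 {V : Type} [Fintype V] [DecidableEq V] (E : Finset (V × V)) (r : V)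
    (x f : V × V → ℝ)
    (hx01 : ∀ e ∈ E, x e = 0 ∨ x e = 1) (hf0 : ∀ e ∈ E, 0 ≤ f e)
    (h1 : ∀ v : V, v ≠ r → ∑ e ∈ E.filter (fun e => e.2 = v), x e ≤ 1)
    (h2 : ∑ e ∈ E.filter (fun e => e.2 = r), x e = 0)
    (h3 : ∀ v : V, v ≠ r →
      (∑ e ∈ E.filter (fun e => e.2 = v), f e) -
        (∑ e ∈ E.filter (fun e => e.1 = v), f e) ≥
      ∑ e ∈ E.filter (fun e => e.2 = v), x e)
    (h4 : ∀ e ∈ E, f e ≤ ((Fintype.card V : ℝ) - 1) * x e) :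
    IsRTree ((E.filter (fun e => x e = 1)).image (fun e => s(e.1, e.2))) r :=
  IsFeasibleFlow.isRTree ⟨hx01, hf0, h1, h2, h3, h4⟩
end

section
/- Let R be a tree in a finite graph G = (V,E) containing a vertex r. Orient the edges of R away from r to obtain x ∈ {0,1}^E (on the corresponding directed edges). Then there exists f : E → ℝ≥0 such that: x(δ⁻(v)) ≤ 1 for all v ≠ r; x(δ⁻(r)) = 0; f(δ⁻(v)) − f(δ⁺(v)) ≥ x(δ⁻(v)) for all v ≠ r; f(e) ≥ 0 and f(e) ≤ (|V|−1)·x(e) for all edges e. -/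
/-!
Let `p` be a breadth-first parent map of the tree `R`: every vertex `v ≠ r` reachable from `r`
has a neighbour `p v` strictly closer to `r`. The edges `s(p v, v)` are distinct, and there are
as many of them as edges of `R`, so they are all of `R`. Removing `s(p v, v)` keeps `p v`
connected to `r` but cuts off `v`, since otherwise everything would remain reachable from `r`
with one edge fewer. Hence `x` is the indicator of the arcs `(p v, v)`.

Send along `(p v, v)` one unit of flow for each vertex of the subtree below `v`. The subtrees of
the children of `v` are disjoint and, together with `v`, make up the subtree of `v`, so exactly
one unit stays at `v`; no subtree contains `r`, which gives the capacity `|V| - 1`.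
-/

variable {V : Type} [Fintype V] [DecidableEq V]

open Finset Relation

section ParentForest

/-- A rooted forest: every vertex of `N` has parent `p v`, the other vertices are roots.
`ReflTransGen (IsChild N p) w v` says that `w` lies in the subtree below `v`. -/
def IsChild (N : Finset V) (p : V → V) (c v : V) : Prop := c ∈ N ∧ p c = v

def children (N : Finset V) (p : V → V) (v : V) : Finset V := N.filter (p · = v)

open Classical in
noncomputable def subtree (N : Finset V) (p : V → V) (v : V) : Finset V :=
  univ.filter (ReflTransGen (IsChild N p) · v)

variable {N : Finset V} {p : V → V}

omit [DecidableEq V] in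
lemma mem_subtree {v w : V} : w ∈ subtree N p v ↔ ReflTransGen (IsChild N p) w v := by
  classical
  simp [subtree]

omit [Fintype V] in
lemma mem_children {c v : V} : c ∈ children N p v ↔ IsChild N p c v := mem_filter

omit [Fintype V] [DecidableEq V] in
lemma le_of_reflTransGen_isChild {h : V → ℕ} (hp : ∀ v ∈ N, h (p v) < h v) {v w : V}
    (hwv : ReflTransGen (IsChild N p) w v) : h v ≤ h w := by
  induction hwv with
  | refl => rfl
  | tail _ hbc ih => obtain ⟨hb, rfl⟩ := hbc; exact (hp _ hb).le.trans ih

lemma subtree_eq_insert_biUnion (v : V) :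
    subtree N p v = insert v ((children N p v).biUnion (subtree N p)) := by
  ext w
  simp only [mem_insert, mem_biUnion, mem_children, mem_subtree]
  constructor
  · intro hwv
    rcases hwv.cases_tail with rfl | ⟨c, hwc, hcv⟩
    · exact .inl rfl
    · exact .inr ⟨c, hcv, hwc⟩
  · rintro (rfl | ⟨c, hcv, hwc⟩)
    · exact .refl
    · exact hwc.tail hcv

omit [Fintype V] [DecidableEq V] in
lemma not_reflTransGen_of_isChild {h : V → ℕ} (hp : ∀ v ∈ N, h (p v) < h v) {c v : V}
    (hcv : IsChild N p c v) : ¬ ReflTransGen (IsChild N p) v c := fun hvc => by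
  obtain ⟨hc, rfl⟩ := hcv
  exact (le_of_reflTransGen_isChild hp hvc).not_gt (hp c hc)

omit [Fintype V] [DecidableEq V] in
lemma eq_of_reflTransGen_of_isChild {h : V → ℕ} (hp : ∀ v ∈ N, h (p v) < h v) {c c' v : V}
    (hc : IsChild N p c v) (hc' : IsChild N p c' v) (hcc' : ReflTransGen (IsChild N p) c c') :
    c = c' := by
  rcases hcc'.cases_head with rfl | ⟨d, hcd, hdc'⟩
  · rfl
  · obtain rfl : d = v := hcd.2.symm.trans hc.2
    exact absurd hdc' (not_reflTransGen_of_isChild hp hc')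

omit [DecidableEq V] in
lemma disjoint_subtree_of_isChild {h : V → ℕ} (hp : ∀ v ∈ N, h (p v) < h v) {c c' v : V}
    (hc : IsChild N p c v) (hc' : IsChild N p c' v) (hne : c ≠ c') :
    Disjoint (subtree N p c) (subtree N p c') := by
  refine disjoint_left.2 fun w hwc hwc' => hne ?_
  rcases (mem_subtree.1 hwc).total_of_right_unique (fun _ _ _ h h' => h.2.symm.trans h'.2)
    (mem_subtree.1 hwc') with h | h
  · exact eq_of_reflTransGen_of_isChild hp hc hc' h
  · exact (eq_of_reflTransGen_of_isChild hp hc' hc h).symm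

lemma card_subtree {h : V → ℕ} (hp : ∀ v ∈ N, h (p v) < h v) (v : V) :
    #(subtree N p v) = ∑ c ∈ children N p v, #(subtree N p c) + 1 := by
  rw [subtree_eq_insert_biUnion, card_insert_of_notMem, card_biUnion]
  · intro c hc c' hc' hne
    exact disjoint_subtree_of_isChild hp (mem_children.1 hc) (mem_children.1 hc') hne
  · simp only [mem_biUnion, mem_children, mem_subtree, not_exists, not_and]
    exact fun c hc => not_reflTransGen_of_isChild hp hc

omit [DecidableEq V] in
lemma eq_of_mem_subtree_of_notMem {v w : V} (hw : w ∈ subtree N p v) (hwN : w ∉ N) : w = v := by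
  rcases (mem_subtree.1 hw).cases_head with h | ⟨d, hwd, -⟩
  · exact h
  · exact absurd hwd.1 hwN

omit [Fintype V] [DecidableEq V] in
lemma injOn_parentEdge {h : V → ℕ} (hp : ∀ v ∈ N, h (p v) < h v) :
    Set.InjOn (fun v => s(p v, v)) N := by
  intro v hv w hw hvw
  rcases Sym2.eq_iff.1 hvw with ⟨-, h'⟩ | ⟨hpv, hpw⟩
  · exact h'
  · subst hpw
    have hw' := hp _ hv
    rw [hpv] at hw'
    exact absurd (hp w hw) (lt_asymm hw')

def treeArc (N : Finset V) (p : V → V) (e : V × V) : ℝ :=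
  if e.2 ∈ N ∧ p e.2 = e.1 then 1 else 0

noncomputable def subtreeFlow (N : Finset V) (p : V → V) (e : V × V) : ℝ :=
  treeArc N p e * #(subtree N p e.2)

omit [Fintype V] in
lemma treeArc_nonneg (e : V × V) : 0 ≤ treeArc N p e := by
  unfold treeArc; split_ifs <;> norm_num

lemma sum_treeArc_in (v : V) : ∑ u, treeArc N p (u, v) = if v ∈ N then 1 else 0 := by
  split_ifs with hv <;> simp [treeArc, hv]

lemma sum_subtreeFlow_in (v : V) :
    ∑ u, subtreeFlow N p (u, v) = (∑ u, treeArc N p (u, v)) * #(subtree N p v) := by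
  simp only [subtreeFlow, sum_mul]

lemma sum_subtreeFlow_out (v : V) :
    ∑ u, subtreeFlow N p (v, u) = ∑ c ∈ children N p v, (#(subtree N p c) : ℝ) := by
  simp [subtreeFlow, treeArc, children, sum_filter, ite_and]

lemma sum_subtreeFlow_in_sub_out {h : V → ℕ} (hp : ∀ v ∈ N, h (p v) < h v) {v : V}
    (hv : v ∈ N ∨ children N p v = ∅) :
    ∑ u, subtreeFlow N p (u, v) - ∑ u, subtreeFlow N p (v, u) = ∑ u, treeArc N p (u, v) := by
  have hcard : (#(subtree N p v) : ℝ) = ∑ c ∈ children N p v, (#(subtree N p c) : ℝ) + 1 := by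
    exact_mod_cast card_subtree hp v
  rw [sum_subtreeFlow_in, sum_subtreeFlow_out, sum_treeArc_in]
  by_cases hvN : v ∈ N
  · rw [if_pos hvN, hcard]; ring
  · rw [if_neg hvN, hv.resolve_left hvN, sum_empty]; ring

lemma subtreeFlow_nonneg (e : V × V) : 0 ≤ subtreeFlow N p e :=
  mul_nonneg (treeArc_nonneg e) (Nat.cast_nonneg _)

lemma subtreeFlow_le {r : V} (hr : r ∉ N) (e : V × V) :
    subtreeFlow N p e ≤ (Fintype.card V - 1) * treeArc N p e := by
  obtain ⟨u, v⟩ := e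
  by_cases huv : v ∈ N ∧ p v = u
  · have hrv : r ∉ subtree N p v := fun hrv =>
      hr (eq_of_mem_subtree_of_notMem hrv hr ▸ huv.1)
    have : (#(subtree N p v) : ℝ) + 1 ≤ Fintype.card V := by
      exact_mod_cast card_lt_univ_of_notMem hrv
    simp only [subtreeFlow, treeArc, if_pos huv]
    linarith
  · simp [subtreeFlow, treeArc, huv]

end ParentForest

section BFSParent

omit [Fintype V] [DecidableEq V] in
lemma reachE_iff_reachable {S : Finset (Sym2 V)} {u v : V} :
    ReachE S u v ↔ (SimpleGraph.fromEdgeSet (S : Set (Sym2 V))).Reachable u v := by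
  rw [SimpleGraph.reachable_iff_reflTransGen, ReachE]
  constructor
  · intro h
    induction h with
    | refl => exact .refl
    | @tail a b _ hab ih =>
      by_cases hba : a = b
      · exact hba ▸ ih
      · exact ih.tail ((SimpleGraph.fromEdgeSet_adj _).2 ⟨hab, hba⟩)
  · exact ReflTransGen.mono (fun a b hab => ((SimpleGraph.fromEdgeSet_adj _).1 hab).1) u v

noncomputable def depth (S : Finset (Sym2 V)) (r v : V) : ℕ :=
  (SimpleGraph.fromEdgeSet (S : Set (Sym2 V))).dist r v

omit [Fintype V] [DecidableEq V] in
lemma exists_parent {S : Finset (Sym2 V)} {r v : V} (hv : ReachE S r v) (hvr : v ≠ r) :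
    ∃ u, s(u, v) ∈ S ∧ ReachE S r u ∧ depth S r u < depth S r v := by
  have hrv := reachE_iff_reachable.1 hv
  obtain ⟨w, hw⟩ := hrv.symm.exists_walk_length_eq_dist
  cases w with
  | nil => exact absurd rfl hvr
  | @cons _ u _ hvu q =>
    refine ⟨u, Sym2.eq_swap ▸ ((SimpleGraph.fromEdgeSet_adj _).1 hvu).1,
      reachE_iff_reachable.2 (hrv.trans hvu.reachable), ?_⟩
    have := SimpleGraph.dist_le q
    simp only [SimpleGraph.Walk.length_cons] at hw
    simp only [depth, SimpleGraph.dist_comm (u := r)]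
    omega

open Classical in
noncomputable def parent (S : Finset (Sym2 V)) (r v : V) : V :=
  if h : ReachE S r v ∧ v ≠ r then (exists_parent h.1 h.2).choose else v

omit [Fintype V] in
lemma parent_spec {S : Finset (Sym2 V)} {r v : V} (hv : ReachE S r v) (hvr : v ≠ r) :
    s(parent S r v, v) ∈ S ∧ ReachE S r (parent S r v) ∧
      depth S r (parent S r v) < depth S r v := by
  rw [parent, dif_pos ⟨hv, hvr⟩]
  exact (exists_parent hv hvr).choose_spec

open Classical in
noncomputable def reachSet (S : Finset (Sym2 V)) (r : V) : Finset V :=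
  univ.filter (ReachE S r)

omit [DecidableEq V] in
lemma mem_reachSet {S : Finset (Sym2 V)} {r v : V} : v ∈ reachSet S r ↔ ReachE S r v := by
  classical
  simp [reachSet]

lemma mem_reachSet_erase {S : Finset (Sym2 V)} {r v : V} :
    v ∈ (reachSet S r).erase r ↔ ReachE S r v ∧ v ≠ r := by
  rw [mem_erase, mem_reachSet, and_comm]

lemma depth_parent_lt {S : Finset (Sym2 V)} {r : V} :
    ∀ v ∈ (reachSet S r).erase r, depth S r (parent S r v) < depth S r v := fun _ hv =>
  (parent_spec (mem_reachSet_erase.1 hv).1 (mem_reachSet_erase.1 hv).2).2.2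

lemma card_reachSet_le (S : Finset (Sym2 V)) (r : V) : #(reachSet S r) ≤ #S + 1 := by
  have hr : r ∈ reachSet S r := mem_reachSet.2 .refl
  have := card_le_card_of_injOn (t := S) (fun v => s(parent S r v, v))
    (fun v hv => (parent_spec (mem_reachSet_erase.1 hv).1 (mem_reachSet_erase.1 hv).2).1)
    (injOn_parentEdge depth_parent_lt)
  rw [card_erase_of_mem hr] at this
  omega

end BFSParent

section Tree

omit [Fintype V] in
lemma reachE_erase_parentEdge_of_depth_lt {S : Finset (Sym2 V)} {r v : V} (hv : ReachE S r v)
    (hvr : v ≠ r) {w : V} (hw : ReachE S r w) (hwv : depth S r w < depth S r v) :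
    ReachE (S.erase s(parent S r v, v)) r w := by
  induction hn : depth S r w using Nat.strong_induction_on generalizing w with
  | _ n ih =>
    by_cases hwr : w = r
    · exact hwr ▸ .refl
    obtain ⟨hpw, hrpw, hdw⟩ := parent_spec hw hwr
    have hne : s(parent S r w, w) ≠ s(parent S r v, v) := by
      intro heq
      have hdv := (parent_spec hv hvr).2.2
      rcases Sym2.eq_iff.1 heq with ⟨-, rfl⟩ | ⟨hwv', hvw'⟩
      · omega
      · rw [hwv', hvw'] at hdw
        omega
    exact (ih _ (hn ▸ hdw) hrpw (hdw.trans hwv) rfl).tail (mem_erase.2 ⟨hne, hpw⟩)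

omit [Fintype V] in
lemma reachE_erase_parentEdge_parent {S : Finset (Sym2 V)} {r v : V} (hv : ReachE S r v)
    (hvr : v ≠ r) : ReachE (S.erase s(parent S r v, v)) r (parent S r v) :=
  reachE_erase_parentEdge_of_depth_lt hv hvr (parent_spec hv hvr).2.1 (parent_spec hv hvr).2.2

omit [Fintype V] in
lemma reachE_erase_of_reachE_endpoints {S : Finset (Sym2 V)} {r a b w : V}
    (ha : ReachE (S.erase s(a, b)) r a) (hb : ReachE (S.erase s(a, b)) r b)
    (hw : ReachE S r w) : ReachE (S.erase s(a, b)) r w := by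
  induction hw with
  | refl => exact .refl
  | @tail c d _ hcd ih =>
    by_cases he : s(c, d) = s(a, b)
    · rcases Sym2.eq_iff.1 he with ⟨-, rfl⟩ | ⟨-, rfl⟩
      · exact hb
      · exact ha
    · exact ih.tail (mem_erase.2 ⟨he, hcd⟩)

lemma card_reachSet_of_isRTree {R : Finset (Sym2 V)} {r : V} (hT : IsRTree R r) :
    #(reachSet R r) = #R + 1 := by
  rw [hT.2]
  congr 1
  ext v
  rw [mem_reachSet, mem_insert]
  constructor
  · intro hv
    rcases hv.cases_tail with rfl | ⟨c, -, hcv⟩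
    · exact .inl rfl
    · exact .inr (mem_filter.2 ⟨mem_univ v, s(c, v), hcv, Sym2.mem_mk_right c v⟩)
  · rintro (rfl | hv)
    · exact .refl
    · exact hT.1 v hv

lemma not_reachE_erase_parentEdge {R : Finset (Sym2 V)} {r v : V} (hT : IsRTree R r)
    (hv : ReachE R r v) (hvr : v ≠ r) : ¬ ReachE (R.erase s(parent R r v, v)) r v := by
  intro hv'
  have hsub : reachSet R r ⊆ reachSet (R.erase s(parent R r v, v)) r := fun w hw =>
    mem_reachSet.2 (reachE_erase_of_reachE_endpoints
      (reachE_erase_parentEdge_parent hv hvr) hv' (mem_reachSet.1 hw))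
  have hle := (card_le_card hsub).trans (card_reachSet_le _ r)
  rw [card_reachSet_of_isRTree hT, card_erase_of_mem (parent_spec hv hvr).1] at hle
  have := card_pos.2 ⟨_, (parent_spec hv hvr).1⟩
  omega

lemma image_parentEdge {R : Finset (Sym2 V)} {r : V} (hT : IsRTree R r) :
    ((reachSet R r).erase r).image (fun v => s(parent R r v, v)) = R := by
  refine eq_of_subset_of_card_le (image_subset_iff.2 fun v hv =>
    (parent_spec (mem_reachSet_erase.1 hv).1 (mem_reachSet_erase.1 hv).2).1) ?_
  rw [card_image_of_injOn (injOn_parentEdge depth_parent_lt),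
    card_erase_of_mem (mem_reachSet.2 .refl), card_reachSet_of_isRTree hT, Nat.add_sub_cancel]

lemma orientation_iff {R : Finset (Sym2 V)} {r : V} (hT : IsRTree R r) (u v : V) :
    s(u, v) ∈ R ∧ ReachE (R.erase s(u, v)) r u ↔
      v ∈ (reachSet R r).erase r ∧ parent R r v = u := by
  constructor
  · rintro ⟨huv, hu⟩
    rw [← image_parentEdge hT, mem_image] at huv
    obtain ⟨w, hw, hwuv⟩ := huv
    rcases Sym2.eq_iff.1 hwuv with ⟨hpw, rfl⟩ | ⟨rfl, rfl⟩
    · exact ⟨hw, hpw⟩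
    · rw [mem_reachSet_erase] at hw
      rw [← hwuv] at hu
      exact absurd hu (not_reachE_erase_parentEdge hT hw.1 hw.2)
  · rintro ⟨hv, rfl⟩
    rw [mem_reachSet_erase] at hv
    exact ⟨(parent_spec hv.1 hv.2).1, reachE_erase_parentEdge_parent hv.1 hv.2⟩

lemma eq_treeArc_of_orientation {R : Finset (Sym2 V)} {r : V} (hT : IsRTree R r)
    {x : V × V → ℝ}
    (hx1 : ∀ u v : V, x (u, v) = 1 ↔ (s(u, v) ∈ R ∧ ReachE (R.erase s(u, v)) r u))
    (hx01 : ∀ e : V × V, x e = 0 ∨ x e = 1) :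
    x = treeArc ((reachSet R r).erase r) (parent R r) := by
  funext ⟨u, v⟩
  rw [treeArc]
  split_ifs with huv
  · exact (hx1 u v).2 ((orientation_iff hT u v).2 huv)
  · exact (hx01 (u, v)).resolve_right fun h => huv ((orientation_iff hT u v).1 ((hx1 u v).1 h))

lemma children_parent_eq_empty {S : Finset (Sym2 V)} {r v : V} (hv : ¬ ReachE S r v) :
    children ((reachSet S r).erase r) (parent S r) v = ∅ := by
  refine filter_eq_empty_iff.2 fun c hc hcv => hv ?_
  rw [mem_reachSet_erase] at hc
  exact hcv ▸ (parent_spec hc.1 hc.2).2.1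

end Tree

theorem stmt12_general {V : Type} [Fintype V] [DecidableEq V] (R : Finset (Sym2 V)) (r : V)
    (hTree : IsRTree R r) (x : V × V → ℝ)
    (hx1 : ∀ u v : V, x (u, v) = 1 ↔
      (s(u, v) ∈ R ∧ ReachE (R.erase s(u, v)) r u))
    (hx01 : ∀ e : V × V, x e = 0 ∨ x e = 1) :
    ∃ f : V × V → ℝ,
      (∀ e : V × V, 0 ≤ f e) ∧
      (∀ v : V, v ≠ r → ∑ u : V, x (u, v) ≤ 1) ∧
      (∑ u : V, x (u, r) = 0) ∧
      (∀ v : V, v ≠ r →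
        (∑ u : V, f (u, v)) - (∑ u : V, f (v, u)) ≥ ∑ u : V, x (u, v)) ∧
      (∀ e : V × V, f e ≤ ((Fintype.card V : ℝ) - 1) * x e) := by
  have hrN : r ∉ (reachSet R r).erase r := notMem_erase r _
  obtain rfl := eq_treeArc_of_orientation hTree hx1 hx01
  refine ⟨subtreeFlow _ _, subtreeFlow_nonneg, fun v _ => ?_, ?_, fun v hvr => ?_,
    subtreeFlow_le hrN⟩
  · rw [sum_treeArc_in]; split_ifs <;> norm_num
  · rw [sum_treeArc_in, if_neg hrN]
  · refine (sum_subtreeFlow_in_sub_out depth_parent_lt ?_).ge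
    by_cases hv : ReachE R r v
    · exact .inl (mem_reachSet_erase.2 ⟨hv, hvr⟩)
    · exact .inr (children_parent_eq_empty hv)

/-- backward direction of Proposition 1: let `R ⊆ G` be a tree
containing `r`, and let `x` be its orientation away from `r` (on the bidirected graph:
`x(u,v) = 1` iff `s(u,v) ∈ R` and `u` stays connected to `r` after removing that edge,
i.e. `u` is the endpoint nearer to `r`). Then there exists `f ≥ 0` such that all the
MIP constraints hold: `x(δ⁻(v)) ≤ 1` for `v ≠ r`, `x(δ⁻(r)) = 0`,
`f(δ⁻(v)) − f(δ⁺(v)) ≥ x(δ⁻(v))` for `v ≠ r`, and `0 ≤ f(e) ≤ (|V|−1)·x(e)`. -/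
theorem stmt12 {V : Type} [Fintype V] [DecidableEq V] (G R : Finset (Sym2 V)) (r : V)
    (hRG : R ⊆ G) (hTree : IsRTree R r) (x : V × V → ℝ)
    (hx1 : ∀ u v : V, x (u, v) = 1 ↔
      (s(u, v) ∈ R ∧ ReachE (R.erase s(u, v)) r u))
    (hx01 : ∀ e : V × V, x e = 0 ∨ x e = 1) :
    ∃ f : V × V → ℝ,
      (∀ e : V × V, 0 ≤ f e) ∧
      (∀ v : V, v ≠ r → ∑ u : V, x (u, v) ≤ 1) ∧
      (∑ u : V, x (u, r) = 0) ∧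
      (∀ v : V, v ≠ r →
        (∑ u : V, f (u, v)) - (∑ u : V, f (v, u)) ≥ ∑ u : V, x (u, v)) ∧
      (∀ e : V × V, f e ≤ ((Fintype.card V : ℝ) - 1) * x e) :=
  stmt12_general R r hTree x hx1 hx01
end
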